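/- Let a, b be nonzero integers such that −ab is not a perfect square, and let ε ∈ {1, −1}. Then X, Y ∈ M₂(ℤ) satisfy aX² + bY² = 2ε·I and XY = YX if and only if one of the following holds: (i) X = t₁I and Y = t₂I for integers t₁, t₂ with a·t₁² + b·t₂² = 2ε; (ii) X = t₁I and Y = [[t₄, t₂],[t₃, −t₄]] for integers t₁, t₂, t₃, t₄ with a·t₁² + b(t₄² + t₂t₃) = 2ε; (iii) there exist integers t₁, t₂, t₃, t₄, u, v, x, y with u ≠ 2ε, g = gcd(va, u − 2ε), such that 2ε·x = u·t₁ + v·b·t₄ and 2ε·y = v·a·t₁ − u·t₄, X = [[t₁, ((u−2ε)/g)·t₂],[((u−2ε)/g)·t₃, x]], Y = [[t₄, (va/g)·t₂],[(va/g)·t₃, y]], and the relations u² + abv² = 4 and g²(a·t₁² + b·t₄²) + 4a·t₂t₃·(2 − εu) = 2ε·g² hold. -/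

import Mathlib

/-!
If `X` is not scalar, a matrix commuting with it is an integral combination of `1` and one
matrix `W`: `X = p + m W`, `Y = q + n W` with `m, n` coprime. By Cayley–Hamilton,
`a X² + b Y² = 2ε` splits into two scalar equations (the coefficients of `1` and of `W`). As `-ab`
is not a square, `D = a m² + b n² ≠ 0`, and they give `D u = 2ε (b n² - a m²)`, `D v = -4ε m n`
for `u = a det X - b det Y`, `v = tr X tr Y - tr (XY)`. Thus `(u + v √(-ab)) / 2` has norm one,
`(u - 2ε, v a) = α (m, n)`, and `g = |α|`. If `X` is scalar then so is `Y²`, and Cayley–Hamilton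
makes `Y` scalar or traceless.
-/

namespace Matrix

variable {R : Type*} [CommRing R]

theorem sq_eq_trace_smul_sub_det_smul_fin_two (A : Matrix (Fin 2) (Fin 2) R) :
    A ^ 2 = A.trace • A - A.det • 1 := by
  rw [eta_fin_two A]
  ext i j
  fin_cases i <;> fin_cases j <;> simp [sq, trace_fin_two_of, det_fin_two_of] <;> ring

theorem exists_eq_smul_one_iff_fin_two (A : Matrix (Fin 2) (Fin 2) R) :
    (∃ t : R, A = t • 1) ↔ A 0 1 = 0 ∧ A 1 0 = 0 ∧ A 0 0 = A 1 1 := by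
  constructor
  · rintro ⟨t, rfl⟩
    simp
  · rintro ⟨h01, h10, h00⟩
    refine ⟨A 1 1, ?_⟩
    rw [eta_fin_two A]
    ext i j
    fin_cases i <;> fin_cases j <;> simp [h01, h10, h00]

theorem mul_comm_iff_fin_two (X Y : Matrix (Fin 2) (Fin 2) R) :
    X * Y = Y * X ↔ X 0 1 * Y 1 0 = Y 0 1 * X 1 0 ∧
      (X 0 0 - X 1 1) * Y 0 1 = (Y 0 0 - Y 1 1) * X 0 1 ∧
      (X 0 0 - X 1 1) * Y 1 0 = (Y 0 0 - Y 1 1) * X 1 0 := by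
  simp only [← Matrix.ext_iff, Fin.forall_fin_two, mul_apply, Fin.sum_univ_two]
  constructor
  · rintro ⟨⟨h₀₀, h₀₁⟩, h₁₀, -⟩
    exact ⟨by linear_combination h₀₀, by linear_combination h₀₁, by linear_combination -h₁₀⟩
  · rintro ⟨h₁, h₂, h₃⟩
    exact ⟨⟨by linear_combination h₁, by linear_combination h₂⟩, by linear_combination -h₃,
      by linear_combination -h₁⟩

theorem traceless_sq_fin_two (d p q : R) : !![d, p; q, -d] ^ 2 = (d ^ 2 + p * q) • 1 := by
  ext i j
  fin_cases i <;> fin_cases j <;> simp [sq] <;> ring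

theorem eq_of_trace_eq_zero_fin_two {A : Matrix (Fin 2) (Fin 2) R} (h : A.trace = 0) :
    A = !![A 0 0, A 0 1; A 1 0, -A 0 0] := by
  rw [trace_fin_two] at h
  rw [← eq_neg_of_add_eq_zero_right h]
  exact eta_fin_two A

theorem smul_sq_add_smul_sq_of_smul_one_add_smul (a b p q m n : R)
    (W : Matrix (Fin 2) (Fin 2) R) :
    a • (p • 1 + m • W) ^ 2 + b • (q • 1 + n • W) ^ 2 =
      (a * p ^ 2 + b * q ^ 2 - (a * m ^ 2 + b * n ^ 2) * W.det) • 1 +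
        (2 * (a * p * m + b * q * n) + (a * m ^ 2 + b * n ^ 2) * W.trace) • W := by
  have hW := sq_eq_trace_smul_sub_det_smul_fin_two W
  simp only [sq, add_mul, mul_add, smul_mul_smul, one_mul, mul_one] at hW ⊢
  rw [hW]
  module

variable [IsDomain R]

theorem exists_eq_smul_one_of_smul_eq_smul_one {A : Matrix (Fin 2) (Fin 2) R} {k d : R}
    (hk : k ≠ 0) (h : k • A = d • 1) : ∃ t : R, A = t • 1 := by
  have h' := (exists_eq_smul_one_iff_fin_two (k • A)).1 ⟨d, h⟩
  simp only [smul_apply, smul_eq_mul, mul_eq_zero, hk, false_or] at h'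
  exact (exists_eq_smul_one_iff_fin_two A).2 ⟨h'.1, h'.2.1, mul_left_cancel₀ hk h'.2.2⟩

theorem trace_eq_zero_of_smul_sq_eq_smul_one {A : Matrix (Fin 2) (Fin 2) R} {b c : R}
    (hb : b ≠ 0) (h : b • A ^ 2 = c • 1) (hA : ¬∃ t : R, A = t • 1) : A.trace = 0 := by
  by_contra htr
  refine hA (exists_eq_smul_one_of_smul_eq_smul_one (mul_ne_zero hb htr) (d := c + b * A.det) ?_)
  rw [sq_eq_trace_smul_sub_det_smul_fin_two] at h
  linear_combination (norm := module) h

theorem eq_and_eq_zero_of_smul_one_add_smul_eq_smul_one {W : Matrix (Fin 2) (Fin 2) R}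
    {c d κ : R} (hW : ¬∃ t : R, W = t • 1) (h : c • 1 + κ • W = d • 1) : c = d ∧ κ = 0 := by
  have hκ : κ = 0 := by
    by_contra hκ
    exact hW (exists_eq_smul_one_of_smul_eq_smul_one hκ (d := d - c) (by
      linear_combination (norm := module) h))
  rw [hκ, zero_smul, add_zero] at h
  exact ⟨by simpa using congrFun (congrFun h 0) 0, hκ⟩

theorem norm_eq_and_trace_eq_of_smul_sq_add_smul_sq_eq {a b c p q m n w₁ w₂ w₃ : R}
    (hW : ¬∃ t : R, !![w₁, w₂; w₃, 0] = t • 1)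
    (h : a • (p • 1 + m • !![w₁, w₂; w₃, 0]) ^ 2 + b • (q • 1 + n • !![w₁, w₂; w₃, 0]) ^ 2 =
      c • 1) :
    a * p ^ 2 + b * q ^ 2 + (a * m ^ 2 + b * n ^ 2) * (w₂ * w₃) = c ∧
      2 * (a * p * m + b * q * n) + (a * m ^ 2 + b * n ^ 2) * w₁ = 0 := by
  rw [smul_sq_add_smul_sq_of_smul_one_add_smul] at h
  obtain ⟨hN, hT⟩ := eq_and_eq_zero_of_smul_one_add_smul_eq_smul_one hW h
  simp only [det_fin_two_of, trace_fin_two_of, mul_zero, zero_sub, add_zero] at hN hT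
  exact ⟨by linear_combination hN, hT⟩

end Matrix

theorem IsCoprime.exists_eq_mul_of_mul_eq_mul {R : Type*} [CommRing R] [IsDomain R]
    {m n x y : R} (h : IsCoprime m n) (hm : m ≠ 0) (hxy : x * n = y * m) :
    ∃ w, x = m * w ∧ y = n * w := by
  obtain ⟨w, rfl⟩ := h.dvd_of_dvd_mul_right ⟨y, by rw [hxy, mul_comm]⟩
  exact ⟨w, rfl, mul_left_cancel₀ hm (by linear_combination -hxy)⟩

namespace Int

theorem exists_isCoprime_smul_of_mul_eq_mul {ι : Type*} {p q : ι → ℤ} (hp : p ≠ 0)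
    (h : ∀ i j, p i * q j = q i * p j) :
    ∃ m n : ℤ, ∃ w : ι → ℤ, IsCoprime m n ∧ m ≠ 0 ∧ p = m • w ∧ q = n • w := by
  obtain ⟨i, hi⟩ := Function.ne_iff.1 hp
  have hpos := Int.gcd_pos_of_ne_zero_left (q i) hi
  obtain ⟨m, n, hmn, hpi, hqi⟩ := Int.exists_gcd_one hpos
  have hmn' := Int.isCoprime_iff_gcd_eq_one.2 hmn
  have he : (Int.gcd (p i) (q i) : ℤ) ≠ 0 := by positivity
  have hm : m ≠ 0 := by rintro rfl; exact hi (by simpa using hpi)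
  have hw : ∀ j, ∃ w, p j = m * w ∧ q j = n * w := fun j =>
    hmn'.exists_eq_mul_of_mul_eq_mul hm <|
      mul_right_cancel₀ he (by linear_combination (h i j).symm + q j * hpi - p j * hqi)
  choose w hw using hw
  exact ⟨m, n, w, hmn', hm, funext fun j => (hw j).1, funext fun j => (hw j).2⟩

theorem exists_sq_of_mul_sq_add_mul_sq_eq_zero {a b m n : ℤ} (hn : n ≠ 0)
    (h : a * m ^ 2 + b * n ^ 2 = 0) : ∃ s : ℤ, -(a * b) = s ^ 2 := by
  have hsq : (a * m) ^ 2 = n ^ 2 * -(a * b) := by linear_combination a * h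
  obtain ⟨s, hs⟩ := (Int.pow_dvd_pow_iff two_ne_zero).1 ⟨_, hsq⟩
  exact ⟨s, mul_left_cancel₀ (pow_ne_zero 2 hn) (by rw [← hsq, hs]; ring)⟩

theorem mul_sq_add_mul_sq_ne_zero {a b m n : ℤ} (ha : a ≠ 0)
    (hab : ¬∃ s : ℤ, -(a * b) = s ^ 2) (hm : m ≠ 0) : a * m ^ 2 + b * n ^ 2 ≠ 0 := by
  intro h
  rcases eq_or_ne n 0 with rfl | hn
  · simp_all
  · exact hab (exists_sq_of_mul_sq_add_mul_sq_eq_zero hn h)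

theorem gcd_mul_right_eq_abs_of_isCoprime {m n : ℤ} (h : IsCoprime m n) (α : ℤ) :
    (Int.gcd (n * α) (m * α) : ℤ) = |α| := by
  rw [Int.gcd_mul_right, Int.gcd_comm, Int.isCoprime_iff_gcd_eq_one.1 h, one_mul,
    Int.abs_eq_natAbs]

theorem mul_ediv_abs (m : ℤ) {α : ℤ} (hα : α ≠ 0) : m * α / |α| = m * α.sign := by
  rw [show m * α = m * α.sign * |α| by rw [mul_assoc, Int.sign_mul_abs]]
  exact Int.mul_ediv_cancel _ (abs_ne_zero.2 hα)

end Int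

namespace Matrix

theorem eq_smul_one_add_smul_of_eq_smul {A : Matrix (Fin 2) (Fin 2) ℤ} {m : ℤ} {w : Fin 3 → ℤ}
    (h : ![A 0 0 - A 1 1, A 0 1, A 1 0] = m • w) :
    A = A 1 1 • 1 + m • !![w 0, w 1; w 2, 0] := by
  have h₀ := congrFun h 0
  have h₁ := congrFun h 1
  have h₂ := congrFun h 2
  simp only [Fin.isValue, cons_val, Pi.smul_apply, smul_eq_mul] at h₀ h₁ h₂
  ext i j
  fin_cases i <;> fin_cases j <;> simp [h₁, h₂, -zsmul_eq_mul, -zsmul_one]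
  linear_combination h₀

theorem exists_isCoprime_of_mul_comm {X Y : Matrix (Fin 2) (Fin 2) ℤ}
    (hX : ¬∃ t : ℤ, X = t • 1) (h : X * Y = Y * X) :
    ∃ m n w₁ w₂ w₃ : ℤ, IsCoprime m n ∧ m ≠ 0 ∧
      X = X 1 1 • 1 + m • !![w₁, w₂; w₃, 0] ∧ Y = Y 1 1 • 1 + n • !![w₁, w₂; w₃, 0] := by
  obtain ⟨h₁, h₂, h₃⟩ := (mul_comm_iff_fin_two X Y).1 h
  have hp : ![X 0 0 - X 1 1, X 0 1, X 1 0] ≠ 0 := fun hp => hX <|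
    (exists_eq_smul_one_iff_fin_two X).2
      ⟨congrFun hp 1, congrFun hp 2, sub_eq_zero.1 (congrFun hp 0)⟩
  obtain ⟨m, n, w, hmn, hm, hpw, hqw⟩ :=
    Int.exists_isCoprime_smul_of_mul_eq_mul (q := ![Y 0 0 - Y 1 1, Y 0 1, Y 1 0]) hp (by
      intro i j
      fin_cases i <;> fin_cases j <;> simp <;>
        first
          | ring1
          | linear_combination h₁ | linear_combination -h₁ | linear_combination h₂
          | linear_combination -h₂ | linear_combination h₃ | linear_combination -h₃)
  exact ⟨m, n, w 0, w 1, w 2, hmn, hm, eq_smul_one_add_smul_of_eq_smul hpw,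
    eq_smul_one_add_smul_of_eq_smul hqw⟩

end Matrix

section NormForm

variable {R : Type*} [CommRing R] {a b ε p q m n w₁ w₂ w₃ u v : R}

theorem exists_unit_of_norm_eq
    (hN : a * p ^ 2 + b * q ^ 2 + (a * m ^ 2 + b * n ^ 2) * (w₂ * w₃) = 2 * ε)
    (hT : 2 * (a * p * m + b * q * n) + (a * m ^ 2 + b * n ^ 2) * w₁ = 0) :
    ∃ u v : R, (a * m ^ 2 + b * n ^ 2) * u = 2 * ε * (b * n ^ 2 - a * m ^ 2) ∧
      (a * m ^ 2 + b * n ^ 2) * v = -(4 * ε * m * n) :=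
  -- `a det X - b det Y` and `tr X tr Y - tr (X Y)` for `X = p + m W`, `Y = q + n W`,
  -- `W = !![w₁, w₂; w₃, 0]`
  ⟨a * (p ^ 2 + p * m * w₁ - m ^ 2 * (w₂ * w₃)) - b * (q ^ 2 + q * n * w₁ - n ^ 2 * (w₂ * w₃)),
    2 * p * q + w₁ * (p * n + q * m) - 2 * m * n * (w₂ * w₃),
    by linear_combination (b * n ^ 2 - a * m ^ 2) * hN + (a * p * m - b * q * n) * hT,
    by linear_combination -2 * m * n * hN + (p * n + q * m) * hT⟩

theorem mul_sq_add_mul_sq_eq_of_trace_eq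
    (hT : 2 * (a * p * m + b * q * n) + (a * m ^ 2 + b * n ^ 2) * w₁ = 0) :
    a * (p + m * w₁) ^ 2 + b * (q + n * w₁) ^ 2 = a * p ^ 2 + b * q ^ 2 := by
  linear_combination w₁ * hT

theorem sq_mul_norm_add_eq_of_unit {α : R} (hε : ε ^ 2 = 1) (huv : u ^ 2 + a * b * v ^ 2 = 4)
    (hmα : m * α = u - 2 * ε) (hnα : n * α = v * a)
    (hN : a * p ^ 2 + b * q ^ 2 + (a * m ^ 2 + b * n ^ 2) * (w₂ * w₃) = 2 * ε)
    (hT : 2 * (a * p * m + b * q * n) + (a * m ^ 2 + b * n ^ 2) * w₁ = 0) :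
    α ^ 2 * (a * (p + m * w₁) ^ 2 + b * (q + n * w₁) ^ 2) + 4 * a * (w₂ * w₃) * (2 - ε * u) =
      2 * ε * α ^ 2 := by
  have hαD : α ^ 2 * (a * m ^ 2 + b * n ^ 2) = 4 * a * (2 - ε * u) := by
    linear_combination a * (m * α + u - 2 * ε) * hmα + b * (n * α + v * a) * hnα + a * huv
      + 4 * a * hε
  rw [mul_sq_add_mul_sq_eq_of_trace_eq hT]
  linear_combination α ^ 2 * hN - w₂ * w₃ * hαD

variable [IsDomain R]

theorem sq_add_mul_sq_eq_four (hD : a * m ^ 2 + b * n ^ 2 ≠ 0) (hε : ε ^ 2 = 1)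
    (hu : (a * m ^ 2 + b * n ^ 2) * u = 2 * ε * (b * n ^ 2 - a * m ^ 2))
    (hv : (a * m ^ 2 + b * n ^ 2) * v = -(4 * ε * m * n)) :
    u ^ 2 + a * b * v ^ 2 = 4 := by
  refine mul_left_cancel₀ (pow_ne_zero 2 hD) ?_
  linear_combination ((a * m ^ 2 + b * n ^ 2) * u + 2 * ε * (b * n ^ 2 - a * m ^ 2)) * hu
    + a * b * ((a * m ^ 2 + b * n ^ 2) * v - 4 * ε * m * n) * hv
    + 4 * (a * m ^ 2 + b * n ^ 2) ^ 2 * hε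

theorem two_mul_eq_of_unit (hD : a * m ^ 2 + b * n ^ 2 ≠ 0)
    (hT : 2 * (a * p * m + b * q * n) + (a * m ^ 2 + b * n ^ 2) * w₁ = 0)
    (hu : (a * m ^ 2 + b * n ^ 2) * u = 2 * ε * (b * n ^ 2 - a * m ^ 2))
    (hv : (a * m ^ 2 + b * n ^ 2) * v = -(4 * ε * m * n)) :
    2 * ε * p = u * (p + m * w₁) + v * b * (q + n * w₁) ∧
      2 * ε * q = v * a * (p + m * w₁) - u * (q + n * w₁) := by
  constructor <;> refine mul_left_cancel₀ hD ?_
  · linear_combination -(p + m * w₁) * hu - b * (q + n * w₁) * hv + 2 * ε * m * hT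
  · linear_combination (q + n * w₁) * hu - a * (p + m * w₁) * hv + 2 * ε * n * hT

theorem exists_mul_eq_sub_two_mul (hmn : IsCoprime m n) (hm : m ≠ 0)
    (hD : a * m ^ 2 + b * n ^ 2 ≠ 0)
    (hu : (a * m ^ 2 + b * n ^ 2) * u = 2 * ε * (b * n ^ 2 - a * m ^ 2))
    (hv : (a * m ^ 2 + b * n ^ 2) * v = -(4 * ε * m * n)) :
    ∃ α, m * α = u - 2 * ε ∧ n * α = v * a := by
  obtain ⟨α, h₁, h₂⟩ := hmn.exists_eq_mul_of_mul_eq_mul hm (x := u - 2 * ε) (y := v * a)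
    (mul_left_cancel₀ hD (by linear_combination n * hu - a * m * hv))
  exact ⟨α, h₁.symm, h₂.symm⟩

theorem sub_two_mul_ne_zero_of_unit [CharZero R] (ha : a ≠ 0) (hm : m ≠ 0) (hε : ε ^ 2 = 1)
    (hu : (a * m ^ 2 + b * n ^ 2) * u = 2 * ε * (b * n ^ 2 - a * m ^ 2)) : u - 2 * ε ≠ 0 := by
  have hε0 : ε ≠ 0 := ne_zero_pow two_ne_zero (by simp [hε])
  intro h0
  have h4 : 4 * ε * a * m ^ 2 = 0 := by linear_combination hu - (a * m ^ 2 + b * n ^ 2) * h0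
  simp [hε0, ha, hm] at h4

end NormForm

open Matrix in
theorem exists_param_of_not_scalar {a b ε : ℤ} (ha : a ≠ 0) (hab : ¬∃ s : ℤ, -(a * b) = s ^ 2)
    (hε : ε ^ 2 = 1) {X Y : Matrix (Fin 2) (Fin 2) ℤ} (hX : ¬∃ t : ℤ, X = t • 1)
    (h : a • X ^ 2 + b • Y ^ 2 = (2 * ε) • 1) (hXY : X * Y = Y * X) :
    ∃ t₁ t₂ t₃ t₄ u v x y g : ℤ, u ≠ 2 * ε ∧ g = Int.gcd (v * a) (u - 2 * ε) ∧
      2 * ε * x = u * t₁ + v * b * t₄ ∧ 2 * ε * y = v * a * t₁ - u * t₄ ∧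
      X = !![t₁, ((u - 2 * ε) / g) * t₂; ((u - 2 * ε) / g) * t₃, x] ∧
      Y = !![t₄, (v * a / g) * t₂; (v * a / g) * t₃, y] ∧
      u ^ 2 + a * b * v ^ 2 = 4 ∧
      g ^ 2 * (a * t₁ ^ 2 + b * t₄ ^ 2) + 4 * a * t₂ * t₃ * (2 - ε * u) = 2 * ε * g ^ 2 := by
  obtain ⟨m, n, w₁, w₂, w₃, hmn, hm, hXW, hYW⟩ := exists_isCoprime_of_mul_comm hX hXY
  generalize X 1 1 = p at hXW
  generalize Y 1 1 = q at hYW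
  subst hXW hYW
  have hW : ¬∃ t : ℤ, !![w₁, w₂; w₃, 0] = t • 1 := by
    rintro ⟨t, ht⟩
    exact hX ⟨p + m * t, by rw [ht, smul_smul, ← add_smul]⟩
  obtain ⟨hN, hT⟩ := norm_eq_and_trace_eq_of_smul_sq_add_smul_sq_eq hW h
  have hD := Int.mul_sq_add_mul_sq_ne_zero ha hab hm (n := n)
  obtain ⟨u, v, hu, hv⟩ := exists_unit_of_norm_eq hN hT
  have hu2 := sub_two_mul_ne_zero_of_unit ha hm hε hu
  obtain ⟨α, hmα, hnα⟩ := exists_mul_eq_sub_two_mul hmn hm hD hu hv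
  have hα : α ≠ 0 := by rintro rfl; exact hu2 (by rw [← hmα, mul_zero])
  have hsign : α.sign * α.sign = 1 := by
    rw [← Int.sign_mul, Int.sign_eq_one_iff_pos]; exact mul_self_pos.2 hα
  obtain ⟨hx, hy⟩ := two_mul_eq_of_unit hD hT hu hv
  refine ⟨p + m * w₁, α.sign * w₂, α.sign * w₃, q + n * w₁, u, v, p, q, |α|,
    sub_ne_zero.1 hu2, ?_, hx, hy, ?_, ?_, sq_add_mul_sq_eq_four hD hε hu hv, ?_⟩
  · rw [← hmα, ← hnα, Int.gcd_mul_right_eq_abs_of_isCoprime hmn]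
  · rw [← hmα, Int.mul_ediv_abs _ hα]
    ext i j
    fin_cases i <;> fin_cases j <;> simp [-zsmul_eq_mul, -zsmul_one]
    · linear_combination -m * w₂ * hsign
    · linear_combination -m * w₃ * hsign
  · rw [← hnα, Int.mul_ediv_abs _ hα]
    ext i j
    fin_cases i <;> fin_cases j <;> simp [-zsmul_eq_mul, -zsmul_one]
    · linear_combination -n * w₂ * hsign
    · linear_combination -n * w₃ * hsign
  · rw [sq_abs]
    linear_combination
      sq_mul_norm_add_eq_of_unit hε (sq_add_mul_sq_eq_four hD hε hu hv) hmα hnα hN hT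
      + 4 * a * w₂ * w₃ * (2 - ε * u) * hsign

open Matrix in
theorem smul_sq_add_smul_sq_eq_and_mul_comm_of_param {a b ε t₁ t₂ t₃ t₄ u v x y g : ℤ}
    (hε : ε ^ 2 = 1) (hu : u ≠ 2 * ε) (hg : g = Int.gcd (v * a) (u - 2 * ε))
    (hx : 2 * ε * x = u * t₁ + v * b * t₄) (hy : 2 * ε * y = v * a * t₁ - u * t₄)
    {X Y : Matrix (Fin 2) (Fin 2) ℤ}
    (hX : X = !![t₁, ((u - 2 * ε) / g) * t₂; ((u - 2 * ε) / g) * t₃, x])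
    (hY : Y = !![t₄, (v * a / g) * t₂; (v * a / g) * t₃, y])
    (huv : u ^ 2 + a * b * v ^ 2 = 4)
    (hrel : g ^ 2 * (a * t₁ ^ 2 + b * t₄ ^ 2) + 4 * a * t₂ * t₃ * (2 - ε * u) = 2 * ε * g ^ 2) :
    a • X ^ 2 + b • Y ^ 2 = (2 * ε) • 1 ∧ X * Y = Y * X := by
  have hg0 : g ≠ 0 := by
    rw [hg]; exact_mod_cast (Int.gcd_pos_of_ne_zero_right _ (sub_ne_zero.2 hu)).ne'
  have h2εg : 2 * ε * g ≠ 0 :=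
    mul_ne_zero (mul_ne_zero two_ne_zero (ne_zero_pow two_ne_zero (by simp [hε]))) hg0
  obtain ⟨P, hP⟩ : g ∣ u - 2 * ε := hg ▸ Int.gcd_dvd_right _ _
  obtain ⟨R, hR⟩ : g ∣ v * a := hg ▸ Int.gcd_dvd_left _ _
  rw [hP, Int.mul_ediv_cancel_left _ hg0] at hX
  rw [hR, Int.mul_ediv_cancel_left _ hg0] at hY
  subst hX hY
  -- `(x, y)` is `(t₁, t₄)` multiplied by the norm-one unit `(u + v √(-ab)) / (2ε)`.
  have hnorm : a * x ^ 2 + b * y ^ 2 = a * t₁ ^ 2 + b * t₄ ^ 2 := by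
    refine mul_left_cancel₀ (four_ne_zero (α := ℤ)) ?_
    linear_combination a * (2 * ε * x + u * t₁ + v * b * t₄) * hx
      + b * (2 * ε * y + v * a * t₁ - u * t₄) * hy - 4 * (a * x ^ 2 + b * y ^ 2) * hε
      + (a * t₁ ^ 2 + b * t₄ ^ 2) * huv
  have hoff : a * P * (t₁ + x) + b * R * (t₄ + y) = 0 := by
    refine mul_left_cancel₀ h2εg ?_
    linear_combination -2 * ε * a * (t₁ + x) * hP - 2 * ε * b * (t₄ + y) * hR
      + a * (u - 2 * ε) * hx + b * v * a * hy + a * t₁ * huv - 4 * a * t₁ * hε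
  have hdiag : a * (t₁ ^ 2 + P ^ 2 * (t₂ * t₃)) + b * (t₄ ^ 2 + R ^ 2 * (t₂ * t₃)) = 2 * ε := by
    refine mul_left_cancel₀ (pow_ne_zero 2 hg0) ?_
    linear_combination hrel + t₂ * t₃ * (-a * (g * P + u - 2 * ε) * hP
      - b * (g * R + v * a) * hR + a * huv + 4 * a * hε)
  have hcomm : (t₁ - x) * R = (t₄ - y) * P := by
    refine mul_left_cancel₀ h2εg ?_
    linear_combination 2 * ε * (-t₁ * hR - y * hP + t₄ * hP + x * hR) + (u - 2 * ε) * hy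
      - v * a * hx - t₄ * huv + 4 * t₄ * hε
  constructor
  · ext i j
    fin_cases i <;> fin_cases j <;> simp [sq]
    · linear_combination hdiag
    · linear_combination t₂ * hoff
    · linear_combination t₃ * hoff
    · linear_combination hdiag + hnorm
  · rw [mul_comm_iff_fin_two]
    simp only [Fin.isValue, of_apply, cons_val', cons_val_one, cons_val_fin_one, cons_val_zero]
    exact ⟨by ring, by linear_combination t₂ * hcomm, by linear_combination t₃ * hcomm⟩

theorem stmt_17 (a b : ℤ) (ha : a ≠ 0) (hb : b ≠ 0)
    (hnsq : ¬ ∃ s : ℤ, -(a * b) = s ^ 2) (ε : ℤ) (hε : ε = 1 ∨ ε = -1)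
    (X Y : Matrix (Fin 2) (Fin 2) ℤ) :
    (a • X ^ 2 + b • Y ^ 2 = (2 * ε) • (1 : Matrix (Fin 2) (Fin 2) ℤ) ∧ X * Y = Y * X) ↔
    ((∃ t₁ t₂ : ℤ, X = t₁ • (1 : Matrix (Fin 2) (Fin 2) ℤ) ∧
        Y = t₂ • (1 : Matrix (Fin 2) (Fin 2) ℤ) ∧ a * t₁ ^ 2 + b * t₂ ^ 2 = 2 * ε) ∨
     (∃ t₁ t₂ t₃ t₄ : ℤ, X = t₁ • (1 : Matrix (Fin 2) (Fin 2) ℤ) ∧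
        Y = !![t₄, t₂; t₃, -t₄] ∧ a * t₁ ^ 2 + b * (t₄ ^ 2 + t₂ * t₃) = 2 * ε) ∨
     (∃ t₁ t₂ t₃ t₄ u v x y g : ℤ, u ≠ 2 * ε ∧ g = Int.gcd (v * a) (u - 2 * ε) ∧
        2 * ε * x = u * t₁ + v * b * t₄ ∧ 2 * ε * y = v * a * t₁ - u * t₄ ∧
        X = !![t₁, ((u - 2 * ε) / g) * t₂; ((u - 2 * ε) / g) * t₃, x] ∧
        Y = !![t₄, (v * a / g) * t₂; (v * a / g) * t₃, y] ∧
        u ^ 2 + a * b * v ^ 2 = 4 ∧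
        g ^ 2 * (a * t₁ ^ 2 + b * t₄ ^ 2) + 4 * a * t₂ * t₃ * (2 - ε * u) = 2 * ε * g ^ 2)) := by
  have hε2 : ε ^ 2 = 1 := by rcases hε with rfl | rfl <;> norm_num
  constructor
  · rintro ⟨h, hXY⟩
    by_cases hX : ∃ t : ℤ, X = t • 1
    · obtain ⟨t₁, rfl⟩ := hX
      have hY2 : b • Y ^ 2 = (2 * ε - a * t₁ ^ 2) • 1 := by
        rw [sub_smul, ← h, smul_pow, one_pow, smul_smul, add_sub_cancel_left]
      by_cases hY : ∃ t : ℤ, Y = t • 1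
      · obtain ⟨t₂, rfl⟩ := hY
        rw [smul_pow, one_pow, smul_smul] at hY2
        exact Or.inl ⟨t₁, t₂, rfl, rfl, by linear_combination smul_left_injective ℤ one_ne_zero hY2⟩
      · have hYeq := Matrix.eq_of_trace_eq_zero_fin_two
          (Matrix.trace_eq_zero_of_smul_sq_eq_smul_one hb hY2 hY)
        rw [hYeq, Matrix.traceless_sq_fin_two, smul_smul] at hY2
        exact Or.inr (Or.inl ⟨t₁, Y 0 1, Y 1 0, Y 0 0, rfl, hYeq,
          by linear_combination smul_left_injective ℤ one_ne_zero hY2⟩)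
    · exact Or.inr (Or.inr (exists_param_of_not_scalar ha hnsq hε2 hX h hXY))
  · rintro (⟨t₁, t₂, rfl, rfl, h⟩ | ⟨t₁, t₂, t₃, t₄, rfl, rfl, h⟩ |
      ⟨t₁, t₂, t₃, t₄, u, v, x, y, g, hu, hg, hx, hy, hX, hY, huv, hrel⟩)
    · refine ⟨?_, ((Commute.one_left _).smul_left t₁).eq⟩
      rw [smul_pow, smul_pow, one_pow, smul_smul, smul_smul, ← add_smul, h]
    · refine ⟨?_, ((Commute.one_left _).smul_left t₁).eq⟩
      rw [Matrix.traceless_sq_fin_two, smul_pow, one_pow, smul_smul, smul_smul, ← add_smul, h]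
    · exact smul_sq_add_smul_sq_eq_and_mul_comm_of_param hε2 hu hg hx hy hX hY huv hrel
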